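/- Let d ≥ 1 and m ≥ 1, and let C ⊆ (Fin (2*m+1) → ZMod d) be a code with exactly d^m codewords such that any two distinct codewords have Hamming distance at least m+2. Let Φ ∈ EuclideanSpace ℂ (Fin (2*m+1) → ZMod d) be the unit vector with Φ(x) = (Real.sqrt (d^m))⁻¹ if x ∈ C and Φ(x) = 0 otherwise. Then for every subset B ⊆ Fin (2*m+1) with |B| = m, with A = Bᶜ its complement (so |A| = m+1), the family of vectors (φ_k) indexed by k : B → ZMod d, where φ_k ∈ EuclideanSpace ℂ (A → ZMod d) is defined by φ_k(y) = Real.sqrt (d^m) · Φ(x_{k,y}) with x_{k,y} the word agreeing with k on B and with y on A, is an orthonormal family. (Hence Φ is an AME(2m+1,d) state constructed from the MDS code C.) -/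

import Mathlib

/-!
The minimum distance `m + 2` exceeds both `|B| = m` and `|Bᶜ| = m + 1`, so a codeword is
determined by its restriction to `B` as well as by its restriction to `Bᶜ`. As there are `d ^ m`
codewords and `d ^ m` words on `B`, restriction to `B` is a bijection from `C`; hence `φ_k` is the
standard basis vector at the `Bᶜ`-part of the unique codeword extending `k`, and these
`Bᶜ`-parts are pairwise distinct.
-/

open Finset

section

variable {ι α : Type*}

theorem Finset.exists_mem_restrict_eq_of_injOn [DecidableEq ι] [Fintype α]
    {C : Finset (ι → α)} {S : Finset ι} (hinj : Set.InjOn S.restrict (C : Set (ι → α)))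
    (hcard : Fintype.card (S → α) ≤ #C) (k : S → α) : ∃ c ∈ C, S.restrict c = k :=
  surjOn_of_injOn_of_card_le (t := univ) _ (fun _ _ => mem_coe.mpr (mem_univ _)) hinj hcard
    (mem_coe.mpr (mem_univ k))

variable [Fintype ι]

theorem hammingDist_le_card_of_eqOn_compl [DecidableEq α] {x y : ι → α} {S : Finset ι}
    (h : ∀ i ∉ S, x i = y i) : hammingDist x y ≤ #S :=
  card_le_card fun i hi => by
    by_contra hiS
    exact (mem_filter.mp hi).2 (h i hiS)

theorem Finset.restrict_injOn_of_card_compl_lt [DecidableEq ι] [DecidableEq α]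
    {C : Finset (ι → α)} {δ : ℕ} (hdist : ∀ c ∈ C, ∀ c' ∈ C, c ≠ c' → δ ≤ hammingDist c c')
    {S : Finset ι} (hS : #Sᶜ < δ) : Set.InjOn S.restrict (C : Set (ι → α)) := by
  intro c hc c' hc' h
  by_contra hne
  have hle : hammingDist c c' ≤ #Sᶜ :=
    hammingDist_le_card_of_eqOn_compl fun i hi =>
      congrFun h ⟨i, by simpa using hi⟩
  have hge := hdist c hc c' hc' hne
  omega

variable [DecidableEq ι]

def Finset.glueCompl (S : Finset ι) (k : S → α) (y : (Sᶜ : Finset ι) → α) : ι → α :=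
  fun i => if h : i ∈ S then k ⟨i, h⟩ else y ⟨i, mem_compl.mpr h⟩

theorem Finset.glueCompl_restrict (S : Finset ι) (c : ι → α) :
    S.glueCompl (S.restrict c) (Sᶜ.restrict c) = c := by
  funext i
  by_cases h : i ∈ S <;> simp [glueCompl, h]

theorem Finset.restrict_glueCompl (S : Finset ι) (k : S → α) (y : (Sᶜ : Finset ι) → α) :
    S.restrict (S.glueCompl k y) = k := by
  funext i
  simp [glueCompl, i.2]

theorem Finset.compl_restrict_glueCompl (S : Finset ι) (k : S → α)
    (y : (Sᶜ : Finset ι) → α) :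
    Sᶜ.restrict (S.glueCompl k y) = y := by
  funext i
  simp [glueCompl, mem_compl.mp i.2]

theorem Finset.glueCompl_mem_iff [DecidableEq α] {C : Finset (ι → α)} {S : Finset ι}
    (hinj : Set.InjOn S.restrict (C : Set (ι → α))) {c : ι → α} (hc : c ∈ C)
    (y : (Sᶜ : Finset ι) → α) :
    S.glueCompl (S.restrict c) y ∈ C ↔ y = Sᶜ.restrict c := by
  constructor
  · intro hmem
    have hglue : S.glueCompl (S.restrict c) y = c :=
      hinj hmem hc (S.restrict_glueCompl _ _)
    rw [← hglue, compl_restrict_glueCompl]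
  · rintro rfl
    rwa [glueCompl_restrict]

end

theorem mds_state_is_AME_odd_general (d m : ℕ) [NeZero d]
    (C : Finset (Fin (2 * m + 1) → ZMod d))
    (hcard : C.card = d ^ m)
    (hdist : ∀ c ∈ C, ∀ c' ∈ C, c ≠ c' → m + 2 ≤ hammingDist c c')
    (Φ : EuclideanSpace ℂ (Fin (2 * m + 1) → ZMod d))
    (hΦ : ∀ x : Fin (2 * m + 1) → ZMod d,
      Φ x = if x ∈ C then (((Real.sqrt ((d : ℝ) ^ m))⁻¹ : ℝ) : ℂ) else 0)
    (B : Finset (Fin (2 * m + 1))) (hB : B.card = m) :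
    Orthonormal ℂ (fun k : {i // i ∈ B} → ZMod d =>
      (WithLp.equiv 2 (({i // i ∈ Bᶜ} → ZMod d) → ℂ)).symm
        (fun y : {i // i ∈ Bᶜ} → ZMod d =>
          ((Real.sqrt ((d : ℝ) ^ m) : ℝ) : ℂ) *
            Φ (fun i : Fin (2 * m + 1) =>
              if h : i ∈ B then k ⟨i, h⟩ else y ⟨i, Finset.mem_compl.mpr h⟩))) := by
  have hd : (0 : ℝ) < d := by exact_mod_cast NeZero.pos d
  have hsqrt : Real.sqrt ((d : ℝ) ^ m) ≠ 0 := by positivity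
  have hcompl : #Bᶜ = m + 1 := by
    rw [card_compl, hB, Fintype.card_fin]; omega
  have hinjB : Set.InjOn B.restrict (C : Set (Fin (2 * m + 1) → ZMod d)) :=
    restrict_injOn_of_card_compl_lt hdist (S := B) (by omega)
  have hinjA : Set.InjOn Bᶜ.restrict (C : Set (Fin (2 * m + 1) → ZMod d)) :=
    restrict_injOn_of_card_compl_lt hdist (S := Bᶜ) (by rw [compl_compl]; omega)
  choose c hcC hck using
    exists_mem_restrict_eq_of_injOn hinjB (by simp [hcard, ZMod.card, hB])
  have hsingle : ∀ k, (WithLp.equiv 2 _).symm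
      (fun y => ((Real.sqrt ((d : ℝ) ^ m) : ℝ) : ℂ) * Φ (B.glueCompl k y)) =
        EuclideanSpace.single (Bᶜ.restrict (c k)) (1 : ℂ) := by
    intro k
    have hmem := glueCompl_mem_iff hinjB (hcC k)
    rw [hck k] at hmem
    ext y
    simp only [WithLp.equiv_symm_apply, PiLp.toLp_apply, hΦ, hmem, PiLp.single_apply]
    split_ifs
    · rw [← Complex.ofReal_mul, mul_inv_cancel₀ hsqrt, Complex.ofReal_one]
    · rw [mul_zero]
  have hinj : Function.Injective fun k => Bᶜ.restrict (c k) := fun k k' h => by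
    rw [← hck k, ← hck k', hinjA (hcC k) (hcC k') h]
  convert EuclideanSpace.orthonormal_single.comp _ hinj using 1
  funext k
  exact hsingle k

/-- **MDS codes give AME(2m+1,d) states.**
Let `Φ` be the unit vector `(1/√(d^m)) ∑_{c ∈ C} |c⟩` built from an MDS code `C`
of length `2m+1` and minimum distance `m+2` with `d^m` codewords.  Then for every
bipartition of the `2m+1` parties into `B` (with `|B| = m`) and `A = Bᶜ` (with
`|A| = m+1`), the family of vectors `φ_k (y) = √(d^m) · Φ (x_{k,y})`, indexed by
`k : B → ZMod d`, where `x_{k,y}` agrees with `k` on `B` and with `y` on `A`, is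
orthonormal.  Hence `Φ` has the Schmidt form `(1/√(d^m)) ∑_k |k⟩_B |φ_k⟩_A` for
every such bipartition, i.e. `Φ` is absolutely maximally entangled. -/
theorem mds_state_is_AME_odd (d m : ℕ) [NeZero d] (hm : 1 ≤ m)
    (C : Finset (Fin (2 * m + 1) → ZMod d))
    (hcard : C.card = d ^ m)
    (hdist : ∀ c ∈ C, ∀ c' ∈ C, c ≠ c' → m + 2 ≤ hammingDist c c')
    (Φ : EuclideanSpace ℂ (Fin (2 * m + 1) → ZMod d))
    (hΦ : ∀ x : Fin (2 * m + 1) → ZMod d,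
      Φ x = if x ∈ C then (((Real.sqrt ((d : ℝ) ^ m))⁻¹ : ℝ) : ℂ) else 0)
    (B : Finset (Fin (2 * m + 1))) (hB : B.card = m) :
    Orthonormal ℂ (fun k : {i // i ∈ B} → ZMod d =>
      (WithLp.equiv 2 (({i // i ∈ Bᶜ} → ZMod d) → ℂ)).symm
        (fun y : {i // i ∈ Bᶜ} → ZMod d =>
          ((Real.sqrt ((d : ℝ) ^ m) : ℝ) : ℂ) *
            Φ (fun i : Fin (2 * m + 1) =>
              if h : i ∈ B then k ⟨i, h⟩ else y ⟨i, Finset.mem_compl.mpr h⟩))) :=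
  mds_state_is_AME_odd_general d m C hcard hdist Φ hΦ B hB
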